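/- arXiv:gr-qc/9506031 — 2 statements merged into one kernel-verified Lean document; each statement's English description precedes it below -/
import Mathlib

section
/- Let R be an η-symmetric linear operator on ℝ^5 and λ1, λ2, λ3 ∈ ℝ (with any coincidences allowed among them). Then there do not exist vectors X1, X2, X3, X4, X5 forming a basis of ℝ^5 and satisfying the Jordan chain relations R X1 = λ1 X1, R X2 = λ1 X2 + X1, R X3 = λ2 X3, R X4 = λ2 X4 + X3, R X5 = λ3 X5. (A second order symmetric tensor on a 5-dimensional Lorentzian space cannot have Segre type [221] or any of its degeneracies [(22)1], [2(21)], [(221)].) -/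
/-!
For a self-adjoint operator, the eigenvector heading a Jordan chain of length two is null and
orthogonal to the head of any other such chain (compare `η(R X₁, X₂)` with `η(X₁, R X₂)`, and
likewise for `X₃, X₄`). So `X₁, X₃` span a totally null plane. In Lorentzian signature this is
impossible: if `u, v` are null and orthogonal then `v₀ u - u₀ v` is a null vector with vanishing
time component, hence zero, and a nonzero null vector has `u₀ ≠ 0`.
-/

/-- The 5-dimensional Minkowski bilinear form of signature (-,+,+,+,+). -/
def eta (u v : Fin 5 → ℝ) : ℝ :=
  -u 0 * v 0 + u 1 * v 1 + u 2 * v 2 + u 3 * v 3 + u 4 * v 4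

namespace LinearMap

variable {K V : Type*} [CommRing K] [AddCommGroup V] [Module K V] {B : LinearMap.BilinForm K V}
  {R : V → V} {x y z w : V} {a b : K}

theorem IsSelfAdjoint.apply_self_eq_zero_of_jordan_chain (hR : B.IsSelfAdjoint R)
    (hx : R x = a • x) (hy : R y = a • y + x) : B x x = 0 := by
  have h := hR x y
  rw [hx, hy] at h
  simpa using h

theorem IsSelfAdjoint.apply_eq_zero_of_jordan_chain [NoZeroDivisors K] (hR : B.IsSelfAdjoint R)
    (hx : R x = a • x) (hz : R z = b • z) (hw : R w = b • w + z) : B x z = 0 := by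
  have hxz := hR x z
  have hxw := hR x w
  rw [hx, hz] at hxz
  rw [hx, hw] at hxw
  simp only [map_smul, map_add, LinearMap.smul_apply, smul_eq_mul] at hxz hxw
  rcases eq_or_ne a b with rfl | hab
  · linear_combination -hxw
  · exact (mul_eq_zero.mp (by linear_combination hxz : (a - b) * B x z = 0)).resolve_left
      (sub_ne_zero.mpr hab)

end LinearMap

def etaBilin : LinearMap.BilinForm ℝ (Fin 5 → ℝ) :=
  LinearMap.mk₂ ℝ eta (fun _ _ _ => by simp only [eta, Pi.add_apply]; ring)
    (fun _ _ _ => by simp only [eta, Pi.smul_apply, smul_eq_mul]; ring)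
    (fun _ _ _ => by simp only [eta, Pi.add_apply]; ring)
    (fun _ _ _ => by simp only [eta, Pi.smul_apply, smul_eq_mul]; ring)

theorem eq_zero_of_eta_self_eq_zero {w : Fin 5 → ℝ} (hw0 : w 0 = 0) (hw : eta w w = 0) :
    w = 0 := by
  simp only [eta, hw0] at hw
  ext i
  fin_cases i
  · exact hw0
  all_goals
    dsimp only [Fin.reduceFinMk, Pi.zero_apply]
    nlinarith [sq_nonneg (w 1), sq_nonneg (w 2), sq_nonneg (w 3), sq_nonneg (w 4)]

theorem not_linearIndependent_pair_of_eta_null {u v : Fin 5 → ℝ} (hu : eta u u = 0)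
    (hv : eta v v = 0) (huv : eta u v = 0) : ¬ LinearIndependent ℝ ![u, v] := by
  intro hli
  have hcomb : v 0 • u + (-u 0) • v = 0 := by
    apply eq_zero_of_eta_self_eq_zero
    · simp only [Pi.add_apply, Pi.smul_apply, smul_eq_mul]; ring
    · simp only [eta, Pi.add_apply, Pi.smul_apply, smul_eq_mul] at hu hv huv ⊢
      linear_combination v 0 ^ 2 * hu + u 0 ^ 2 * hv - 2 * u 0 * v 0 * huv
  obtain ⟨-, hu0⟩ := LinearIndependent.pair_iff.mp hli _ _ hcomb
  exact hli.ne_zero 0 (eq_zero_of_eta_self_eq_zero (neg_eq_zero.mp hu0) hu)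

theorem no_segre_type_221 (R : (Fin 5 → ℝ) →ₗ[ℝ] (Fin 5 → ℝ))
    (hR : ∀ u v : Fin 5 → ℝ, eta (R u) v = eta u (R v)) (lam1 lam2 lam3 : ℝ) :
    ¬ ∃ X1 X2 X3 X4 X5 : Fin 5 → ℝ,
      (LinearIndependent ℝ ![X1, X2, X3, X4, X5] ∧
        Submodule.span ℝ {X1, X2, X3, X4, X5} = ⊤) ∧
      R X1 = lam1 • X1 ∧
      R X2 = lam1 • X2 + X1 ∧
      R X3 = lam2 • X3 ∧
      R X4 = lam2 • X4 + X3 ∧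
      R X5 = lam3 • X5 := by
  rintro ⟨X1, X2, X3, X4, X5, ⟨hli, -⟩, e1, e2, e3, e4, -⟩
  have hRsa : etaBilin.IsSelfAdjoint R := hR
  have hli13 : LinearIndependent ℝ ![X1, X3] := by
    convert hli.comp ![0, 2] (by decide) using 1
    ext i; fin_cases i <;> rfl
  exact not_linearIndependent_pair_of_eta_null (hRsa.apply_self_eq_zero_of_jordan_chain e1 e2)
    (hRsa.apply_self_eq_zero_of_jordan_chain e3 e4)
    (hRsa.apply_eq_zero_of_jordan_chain e1 e3 e4) hli13
end

section
/- Let R be an η-symmetric linear operator on ℝ^5 and suppose there exist real numbers λ1, λ2, λ3 and a basis X1, X2, X3, X4, X5 of ℝ^5 satisfying R X1 = λ1 X1, R X2 = λ1 X2 + X1, R X3 = λ1 X3 + X2, R X4 = λ2 X4 and R X5 = λ3 X5 (a Jordan structure of Segre type [311] or a degeneracy thereof, with exactly three independent eigenvectors). Then there exists a semi-null pentad (l, m, x, y, z) and real numbers ρ1, ρ4, ρ5 such that for all u, v: η(R u, v) = ρ1(η(l,u)η(m,v)+η(m,u)η(l,v)) + (η(l,u)η(x,v)+η(x,u)η(l,v))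 + ρ1 η(x,u)η(x,v) + ρ4 η(y,u)η(y,v) + ρ5 η(z,u)η(z,v). (Canonical form for Segre type [311].) -/
def SemiNullPentad (l m x y z : Fin 5 → ℝ) : Prop :=
  eta l m = 1 ∧ eta x x = 1 ∧ eta y y = 1 ∧ eta z z = 1 ∧
  eta l l = 0 ∧ eta m m = 0 ∧
  eta l x = 0 ∧ eta l y = 0 ∧ eta l z = 0 ∧
  eta m x = 0 ∧ eta m y = 0 ∧ eta m z = 0 ∧
  eta x y = 0 ∧ eta x z = 0 ∧ eta y z = 0

theorem eta_comm (u v : Fin 5 → ℝ) : eta u v = eta v u := by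
  unfold eta; ring

@[simp] theorem eta_add_left (u v w : Fin 5 → ℝ) : eta (u + v) w = eta u w + eta v w := by
  simp only [eta, Pi.add_apply]; ring

@[simp] theorem eta_add_right (u v w : Fin 5 → ℝ) : eta u (v + w) = eta u v + eta u w := by
  simp only [eta, Pi.add_apply]; ring

@[simp] theorem eta_sub_left (u v w : Fin 5 → ℝ) : eta (u - v) w = eta u w - eta v w := by
  simp only [eta, Pi.sub_apply]; ring

@[simp] theorem eta_sub_right (u v w : Fin 5 → ℝ) : eta u (v - w) = eta u v - eta u w := by
  simp only [eta, Pi.sub_apply]; ring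

@[simp] theorem eta_smul_left (c : ℝ) (u v : Fin 5 → ℝ) : eta (c • u) v = c * eta u v := by
  simp only [eta, Pi.smul_apply, smul_eq_mul]; ring

@[simp] theorem eta_smul_right (c : ℝ) (u v : Fin 5 → ℝ) : eta u (c • v) = c * eta u v := by
  simp only [eta, Pi.smul_apply, smul_eq_mul]; ring

@[simp] theorem eta_zero_left (v : Fin 5 → ℝ) : eta 0 v = 0 := by simp [eta]

@[simp] theorem eta_zero_right (v : Fin 5 → ℝ) : eta v 0 = 0 := by simp [eta]

theorem eq_zero_of_forall_eta_eq_zero {w : Fin 5 → ℝ} (h : ∀ v, eta w v = 0) : w = 0 := by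
  funext i
  have := h (Pi.single i 1)
  fin_cases i <;> simpa [eta] using this

theorem eq_zero_of_forall_mem_span_eta_eq_zero {s : Set (Fin 5 → ℝ)}
    (hs : Submodule.span ℝ s = ⊤) {w : Fin 5 → ℝ} (h : ∀ v ∈ s, eta w v = 0) : w = 0 := by
  refine eq_zero_of_forall_eta_eq_zero fun v => ?_
  induction (hs ▸ Submodule.mem_top : v ∈ Submodule.span ℝ s) using Submodule.span_induction with
  | mem v hv => exact h v hv
  | zero => simp
  | add u v _ _ hu hv => simp [hu, hv]
  | smul a v _ hv => simp [hv]

theorem eq_zero_of_eta_self_nonpos {w : Fin 5 → ℝ} (h0 : w 0 = 0) (h : eta w w ≤ 0) : w = 0 := by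
  simp only [eta, h0] at h
  have : w 1 = 0 ∧ w 2 = 0 ∧ w 3 = 0 ∧ w 4 = 0 := by
    refine ⟨?_, ?_, ?_, ?_⟩ <;>
      nlinarith [sq_nonneg (w 1), sq_nonneg (w 2), sq_nonneg (w 3), sq_nonneg (w 4)]
  funext i
  fin_cases i <;> simp [h0, this]

/-- Subtracting `(w 0 / n 0) • n` kills the time component of `w` without changing `η(w, w)`. -/
theorem exists_eq_smul_of_eta_null {n w : Fin 5 → ℝ} (hn : eta n n = 0) (hn0 : n ≠ 0)
    (hw : eta n w = 0) (hww : eta w w ≤ 0) : ∃ c : ℝ, w = c • n := by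
  have hn₀ : n 0 ≠ 0 := fun h => hn0 (eq_zero_of_eta_self_nonpos h hn.le)
  refine ⟨w 0 / n 0, sub_eq_zero.mp (eq_zero_of_eta_self_nonpos ?_ ?_)⟩
  · simp [field]
  · simpa [eta_comm w n, hw, hn] using hww

theorem eta_self_nonneg_of_eta_null {n w : Fin 5 → ℝ} (hn : eta n n = 0) (hn0 : n ≠ 0)
    (hw : eta n w = 0) : 0 ≤ eta w w := by
  by_contra! hww
  obtain ⟨c, rfl⟩ := exists_eq_smul_of_eta_null hn hn0 hw hww.le
  simp [hn] at hww

theorem eta_self_pos_of_eta_null_pair {l m w : Fin 5 → ℝ} (hl : eta l l = 0) (hlm : eta l m = 1)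
    (hlw : eta l w = 0) (hmw : eta m w = 0) (hw : w ≠ 0) : 0 < eta w w := by
  by_contra! hww
  have hl0 : l ≠ 0 := by rintro rfl; simp at hlm
  obtain ⟨c, rfl⟩ := exists_eq_smul_of_eta_null hl hl0 hlw hww
  simp [eta_comm m l, hlm] at hmw
  simp [hmw] at hw

def EtaSymmetric (R : (Fin 5 → ℝ) →ₗ[ℝ] (Fin 5 → ℝ)) : Prop :=
  ∀ u v, eta (R u) v = eta u (R v)

structure IsJordanChain (R : (Fin 5 → ℝ) →ₗ[ℝ] (Fin 5 → ℝ)) (c : ℝ) (v₁ v₂ v₃ : Fin 5 → ℝ) :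
    Prop where
  apply_one : R v₁ = c • v₁
  apply_two : R v₂ = c • v₂ + v₁
  apply_three : R v₃ = c • v₃ + v₂

section

variable {R : (Fin 5 → ℝ) →ₗ[ℝ] (Fin 5 → ℝ)}

theorem EtaSymmetric.sub_mul_eta (hR : EtaSymmetric R) {a a' b b' : Fin 5 → ℝ} {μ ν : ℝ}
    (ha : R a = μ • a + a') (hb : R b = ν • b + b') :
    (μ - ν) * eta a b = eta a b' - eta a' b := by
  have h := hR a b
  rw [ha, hb] at h
  simp only [eta_add_left, eta_add_right, eta_smul_left, eta_smul_right] at h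
  linarith

theorem apply_sub_smul_of_eigenvector {e f : Fin 5 → ℝ} {μ ν k : ℝ} (he : R e = μ • e)
    (hf : R f = ν • f) (hk : (μ - ν) * k = 0) : R (e - k • f) = μ • (e - k • f) := by
  rw [map_sub, map_smul, he, hf]
  match_scalars
  · ring
  · linear_combination hk

namespace IsJordanChain

variable {c μ : ℝ} {v₁ v₂ v₃ e : Fin 5 → ℝ}

theorem combination (hX : IsJordanChain R c v₁ v₂ v₃) (t p q : ℝ) :
    IsJordanChain R c (t • v₁) (t • v₂ + p • v₁) (t • v₃ + p • v₂ + q • v₁) where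
  apply_one := by rw [map_smul, hX.apply_one, smul_comm]
  apply_two := by simp only [map_add, map_smul, hX.apply_one, hX.apply_two]; module
  apply_three := by
    simp only [map_add, map_smul, hX.apply_one, hX.apply_two, hX.apply_three]; module

theorem eta_gram (hR : EtaSymmetric R) (hX : IsJordanChain R c v₁ v₂ v₃) :
    eta v₁ v₁ = 0 ∧ eta v₁ v₂ = 0 ∧ eta v₂ v₂ = eta v₁ v₃ := by
  have h₁ : R v₁ = c • v₁ + 0 := by rw [hX.apply_one, add_zero]
  have h₁₂ := hR.sub_mul_eta h₁ hX.apply_two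
  have h₁₃ := hR.sub_mul_eta h₁ hX.apply_three
  have h₂₃ := hR.sub_mul_eta hX.apply_two hX.apply_three
  simp only [sub_self, zero_mul, eta_zero_left, sub_zero] at h₁₂ h₁₃ h₂₃
  exact ⟨h₁₂.symm, h₁₃.symm, sub_eq_zero.mp h₂₃.symm⟩

theorem eta_eigenvector (hR : EtaSymmetric R) (hX : IsJordanChain R c v₁ v₂ v₃)
    (he : R e = μ • e) : eta v₁ e = 0 ∧ eta v₂ e = 0 ∧ (c - μ) * eta v₃ e = 0 := by
  have he' : R e = μ • e + 0 := by rw [he, add_zero]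
  have h₁ : R v₁ = c • v₁ + 0 := by rw [hX.apply_one, add_zero]
  have k₁ := hR.sub_mul_eta h₁ he'
  have k₂ := hR.sub_mul_eta hX.apply_two he'
  have k₃ := hR.sub_mul_eta hX.apply_three he'
  simp only [eta_zero_left, eta_zero_right, sub_zero, zero_sub] at k₁ k₂ k₃
  rcases eq_or_ne c μ with rfl | hcμ
  · simp only [sub_self, zero_mul] at k₂ k₃
    exact ⟨neg_eq_zero.mp k₂.symm, neg_eq_zero.mp k₃.symm, by simp⟩
  · have hcμ' : c - μ ≠ 0 := sub_ne_zero.mpr hcμ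
    have e₁ : eta v₁ e = 0 := (mul_eq_zero.mp k₁).resolve_left hcμ'
    have e₂ : eta v₂ e = 0 :=
      (mul_eq_zero.mp (k₂.trans (by rw [e₁, neg_zero]))).resolve_left hcμ'
    exact ⟨e₁, e₂, by rw [k₃, e₂, neg_zero]⟩

/-- `v₁` is null and orthogonal to everything but `v₃`, so nondegeneracy forces `η(v₁, v₃) ≠ 0`;
its sign is that of `η(v₂, v₂)`, which is nonnegative since `v₂ ⊥ v₁`. -/
theorem eta_pos (hR : EtaSymmetric R) (hX : IsJordanChain R c v₁ v₂ v₃) (hv₁ : v₁ ≠ 0)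
    {μ₁ μ₂ : ℝ} {e₁ e₂ : Fin 5 → ℝ} (he₁ : R e₁ = μ₁ • e₁) (he₂ : R e₂ = μ₂ • e₂)
    (hspan : Submodule.span ℝ {v₁, v₂, v₃, e₁, e₂} = ⊤) : 0 < eta v₁ v₃ := by
  obtain ⟨h₁₁, h₁₂, h₂₂⟩ := hX.eta_gram hR
  have hne : eta v₁ v₃ ≠ 0 := fun h₁₃ => hv₁ <| by
    refine eq_zero_of_forall_mem_span_eta_eq_zero hspan ?_
    simp only [Set.mem_insert_iff, Set.mem_singleton_iff, forall_eq_or_imp, forall_eq]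
    exact ⟨h₁₁, h₁₂, h₁₃, (hX.eta_eigenvector hR he₁).1, (hX.eta_eigenvector hR he₂).1⟩
  exact lt_of_le_of_ne (h₂₂ ▸ eta_self_nonneg_of_eta_null h₁₁ hv₁ h₁₂) hne.symm

theorem exists_orthogonal_eigenvector (hR : EtaSymmetric R) (hX : IsJordanChain R c v₁ v₂ v₃)
    (h₁₃ : eta v₁ v₃ ≠ 0) (he : R e = μ • e) :
    ∃ k : ℝ, R (e - k • v₁) = μ • (e - k • v₁) ∧
      eta v₁ (e - k • v₁) = 0 ∧ eta v₂ (e - k • v₁) = 0 ∧ eta v₃ (e - k • v₁) = 0 := by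
  obtain ⟨h₁₁, h₁₂, -⟩ := hX.eta_gram hR
  obtain ⟨h₁, h₂, h₃⟩ := hX.eta_eigenvector hR he
  refine ⟨eta v₃ e / eta v₁ v₃, apply_sub_smul_of_eigenvector he hX.apply_one ?_, ?_, ?_, ?_⟩
  · rw [mul_div_assoc', ← neg_sub c μ, neg_mul, h₃, neg_zero, zero_div]
  · simp [h₁, h₁₁]
  · simp [h₂, eta_comm v₂ v₁, h₁₂]
  · simp [eta_comm v₃ v₁, h₁₃]

theorem exists_normalized (hR : EtaSymmetric R) (hX : IsJordanChain R c v₁ v₂ v₃)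
    (ha : 0 < eta v₁ v₃) :
    ∃ l x m, IsJordanChain R c l x m ∧ eta l m = 1 ∧ eta x x = 1 ∧ eta l l = 0 ∧
      eta m m = 0 ∧ eta l x = 0 ∧ eta m x = 0 ∧
      ∀ w, eta v₁ w = 0 → eta v₂ w = 0 → eta v₃ w = 0 →
        eta l w = 0 ∧ eta x w = 0 ∧ eta m w = 0 := by
  obtain ⟨h₁₁, h₁₂, h₂₂⟩ := hX.eta_gram hR
  set a := eta v₁ v₃
  set b := eta v₂ v₃
  set d := eta v₃ v₃
  have ht : (Real.sqrt a)⁻¹ ^ 2 * a = 1 := by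
    rw [inv_pow, Real.sq_sqrt ha.le, inv_mul_cancel₀ ha.ne']
  set t := (Real.sqrt a)⁻¹
  -- `t` normalises `η(l, m)`; `p` and `q` are chosen to make `η(x, m)` and `η(m, m)` vanish
  set p := -(t * b) / (2 * a) with hp
  set q := -(t ^ 2 * d + p ^ 2 * a + 2 * t * p * b) / (2 * t * a) with hq
  refine ⟨t • v₁, t • v₂ + p • v₁, t • v₃ + p • v₂ + q • v₁, hX.combination t p q,
    ?_, ?_, ?_, ?_, ?_, ?_, fun w h₁ h₂ h₃ => by simp [h₁, h₂, h₃]⟩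
  all_goals simp only [eta_add_left, eta_add_right, eta_smul_left, eta_smul_right,
    eta_comm v₂ v₁, eta_comm v₃ v₁, eta_comm v₃ v₂, h₁₁, h₁₂, h₂₂]
  · linear_combination ht
  · linear_combination ht
  · ring
  · rw [hq, hp]; field_simp; ring
  · ring
  · rw [hp]; field_simp; ring

end IsJordanChain

theorem eta_inv_sqrt_smul_self {v : Fin 5 → ℝ} (h : 0 < eta v v) :
    eta ((Real.sqrt (eta v v))⁻¹ • v) ((Real.sqrt (eta v v))⁻¹ • v) = 1 := by
  rw [eta_smul_left, eta_smul_right, ← mul_assoc, ← sq, inv_pow, Real.sq_sqrt h.le,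
    inv_mul_cancel₀ h.ne']

theorem exists_orthonormal_eigenvectors (hR : EtaSymmetric R) {l m e₁ e₂ : Fin 5 → ℝ}
    {μ₁ μ₂ : ℝ} (hl : eta l l = 0) (hlm : eta l m = 1) (hind : LinearIndependent ℝ ![e₁, e₂])
    (he₁ : R e₁ = μ₁ • e₁) (he₂ : R e₂ = μ₂ • e₂) (hl₁ : eta l e₁ = 0) (hl₂ : eta l e₂ = 0)
    (hm₁ : eta m e₁ = 0) (hm₂ : eta m e₂ = 0) :
    ∃ y z, R y = μ₁ • y ∧ R z = μ₂ • z ∧ eta y y = 1 ∧ eta z z = 1 ∧ eta y z = 0 ∧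
      ∀ w, eta w e₁ = 0 → eta w e₂ = 0 → eta w y = 0 ∧ eta w z = 0 := by
  have hpos : ∀ s t : ℝ, s • e₁ + t • e₂ ≠ 0 → 0 < eta (s • e₁ + t • e₂) (s • e₁ + t • e₂) :=
    fun s t hst => eta_self_pos_of_eta_null_pair hl hlm (by simp [hl₁, hl₂])
      (by simp [hm₁, hm₂]) hst
  have hne : ∀ s t : ℝ, t ≠ 0 → s • e₁ + t • e₂ ≠ 0 := fun s t ht h =>
    ht (LinearIndependent.pair_iff.mp hind s t h).2
  have h₁ : 0 < eta e₁ e₁ := by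
    simpa using hpos 1 0 (by simpa using hind.ne_zero 0)
  set k := eta e₁ e₂ / eta e₁ e₁
  have hz : 0 < eta (e₂ - k • e₁) (e₂ - k • e₁) := by
    simpa [sub_eq_neg_add] using hpos (-k) 1 (hne _ _ one_ne_zero)
  have hRz : R (e₂ - k • e₁) = μ₂ • (e₂ - k • e₁) := by
    refine apply_sub_smul_of_eigenvector he₂ he₁ ?_
    have h₁₂ := hR.sub_mul_eta (a' := 0) (b' := 0) (by rw [he₁, add_zero])
      (by rw [he₂, add_zero])
    simp only [eta_zero_left, eta_zero_right, sub_zero] at h₁₂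
    rw [mul_div_assoc', ← neg_sub μ₁ μ₂, neg_mul, h₁₂, neg_zero, zero_div]
  refine ⟨_, _, by rw [map_smul, he₁, smul_comm], by rw [map_smul, hRz, smul_comm],
    eta_inv_sqrt_smul_self h₁, eta_inv_sqrt_smul_self hz, ?_, fun w hw₁ hw₂ => ?_⟩
  · simp only [eta_smul_left, eta_smul_right, eta_sub_right, k]
    field_simp
    ring
  · simp [hw₁, hw₂]

theorem LinearIndependent.sub_smul_pair {v₁ v₂ v₃ v₄ v₅ : Fin 5 → ℝ}
    (h : LinearIndependent ℝ ![v₁, v₂, v₃, v₄, v₅]) (a b : ℝ) :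
    LinearIndependent ℝ ![v₄ - a • v₁, v₅ - b • v₁] := by
  refine LinearIndependent.pair_iff.mpr fun s t hst => ?_
  have := Fintype.linearIndependent_iff.mp h ![-(s * a + t * b), 0, 0, s, t]
    (by simp [Fin.sum_univ_five]; linear_combination (norm := module) hst)
  exact ⟨this 3, this 4⟩

namespace SemiNullPentad

variable {l m x y z : Fin 5 → ℝ}

theorem linearIndependent (h : SemiNullPentad l m x y z) :
    LinearIndependent ℝ ![l, m, x, y, z] := by
  obtain ⟨hlm, hxx, hyy, hzz, hll, hmm, hlx, hly, hlz, hmx, hmy, hmz, hxy, hxz, hyz⟩ := h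
  refine Fintype.linearIndependent_iff.mpr fun g hg i => ?_
  -- pairing with the dual family `(m, l, x, y, z)` reads off each coefficient
  have := congrArg (eta (![m, l, x, y, z] i)) hg
  fin_cases i <;>
    simpa [Fin.sum_univ_five, eta_comm m l, eta_comm x l, eta_comm y l, eta_comm z l,
      eta_comm x m, eta_comm y m, eta_comm z m, eta_comm y x, eta_comm z x, eta_comm z y,
      hlm, hxx, hyy, hzz, hll, hmm, hlx, hly, hlz, hmx, hmy, hmz, hxy, hxz, hyz] using this

theorem eq_sum (h : SemiNullPentad l m x y z) (u : Fin 5 → ℝ) :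
    u = eta m u • l + eta l u • m + eta x u • x + eta y u • y + eta z u • z := by
  have hspan := h.linearIndependent.span_eq_top_of_card_eq_finrank (by simp)
  refine (sub_eq_zero.mp (eq_zero_of_forall_mem_span_eta_eq_zero hspan ?_)).symm
  obtain ⟨hlm, hxx, hyy, hzz, hll, hmm, hlx, hly, hlz, hmx, hmy, hmz, hxy, hxz, hyz⟩ := h
  simp [eta_comm _ u, eta_comm m l, eta_comm x l, eta_comm y l,
    eta_comm z l, eta_comm x m, eta_comm y m, eta_comm z m, eta_comm y x, eta_comm z x,
    eta_comm z y, hlm, hxx, hyy, hzz, hll, hmm, hlx, hly, hlz, hmx, hmy, hmz, hxy, hxz, hyz]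

theorem eta_apply_eq_canonical (h : SemiNullPentad l m x y z)
    {ρ₁ ρ₄ ρ₅ : ℝ} (hlxm : IsJordanChain R ρ₁ l x m) (hy : R y = ρ₄ • y) (hz : R z = ρ₅ • z)
    (u v : Fin 5 → ℝ) :
    eta (R u) v =
      ρ₁ * (eta l u * eta m v + eta m u * eta l v) +
      (eta l u * eta x v + eta x u * eta l v) +
      ρ₁ * (eta x u * eta x v) + ρ₄ * (eta y u * eta y v) +
      ρ₅ * (eta z u * eta z v) := by
  conv_lhs => rw [h.eq_sum u]
  simp only [map_add, map_smul, hlxm.apply_one, hlxm.apply_two, hlxm.apply_three, hy, hz,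
    eta_add_left, eta_smul_left]
  ring

end SemiNullPentad

end

theorem canonical_form_311
    (R : (Fin 5 → ℝ) →ₗ[ℝ] (Fin 5 → ℝ))
    (hR : ∀ u v : Fin 5 → ℝ, eta (R u) v = eta u (R v))
    (lam1 lam2 lam3 : ℝ) (X1 X2 X3 X4 X5 : Fin 5 → ℝ)
    (hbasis : LinearIndependent ℝ ![X1, X2, X3, X4, X5] ∧
      Submodule.span ℝ {X1, X2, X3, X4, X5} = (⊤ : Submodule ℝ (Fin 5 → ℝ)))
    (h1 : R X1 = lam1 • X1) (h2 : R X2 = lam1 • X2 + X1)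
    (h3 : R X3 = lam1 • X3 + X2) (h4 : R X4 = lam2 • X4) (h5 : R X5 = lam3 • X5) :
    ∃ l m x y z : Fin 5 → ℝ, SemiNullPentad l m x y z ∧
      ∃ p1 p4 p5 : ℝ, ∀ u v : Fin 5 → ℝ, eta (R u) v =
        p1 * (eta l u * eta m v + eta m u * eta l v) +
        (eta l u * eta x v + eta x u * eta l v) +
        p1 * (eta x u * eta x v) + p4 * (eta y u * eta y v) +
        p5 * (eta z u * eta z v) := by
  obtain ⟨hli, hspan⟩ := hbasis
  have hX : IsJordanChain R lam1 X1 X2 X3 := ⟨h1, h2, h3⟩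
  have ha := hX.eta_pos hR (by simpa using hli.ne_zero 0) h4 h5 hspan
  obtain ⟨k4, hY4, h14, h24, h34⟩ := hX.exists_orthogonal_eigenvector hR ha.ne' h4
  obtain ⟨k5, hY5, h15, h25, h35⟩ := hX.exists_orthogonal_eigenvector hR ha.ne' h5
  obtain ⟨l, x, m, hlxm, hlm, hxx, hll, hmm, hlx, hmx, horth⟩ := hX.exists_normalized hR ha
  obtain ⟨hl4, hx4, hm4⟩ := horth _ h14 h24 h34
  obtain ⟨hl5, hx5, hm5⟩ := horth _ h15 h25 h35
  obtain ⟨y, z, hy, hz, hyy, hzz, hyz, horth'⟩ := exists_orthonormal_eigenvectors hR hll hlm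
    (hli.sub_smul_pair k4 k5) hY4 hY5 hl4 hl5 hm4 hm5
  obtain ⟨hly, hlz⟩ := horth' l hl4 hl5
  obtain ⟨hxy, hxz⟩ := horth' x hx4 hx5
  obtain ⟨hmy, hmz⟩ := horth' m hm4 hm5
  have hP : SemiNullPentad l m x y z :=
    ⟨hlm, hxx, hyy, hzz, hll, hmm, hlx, hly, hlz, hmx, hmy, hmz, hxy, hxz, hyz⟩
  exact ⟨l, m, x, y, z, hP, lam1, lam2, lam3, hP.eta_apply_eq_canonical hlxm hy hz⟩
end
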